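/- arXiv:2007.08040 — 6 statements merged into one kernel-verified Lean document; each statement's English description precedes it below -/
import Mathlib

section
/- Let X be a dg algebra and (i, p, h) a deformation retract of X onto a complex Y (so p∘i = 1, i∘p = 1 + ∂^X h + h ∂^X), where the homotopy h satisfies the generalized Leibniz rule h(αβ) ∈ h(α)X + X h(β) for all α, β ∈ X, and h∘i = 0. Then for all α, β ∈ Y one has (∂^X h + h ∂^X)(i(α)·i(β)) = 0. -/
/-!
The generalized Leibniz rule and `h ∘ i = 0` force `h` to vanish on every product `i α · i β`.
Since `i` is a chain map, the Leibniz rule writes `∂(i α · i β)` as a combination of two such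
products, so `h ∂` vanishes on them as well.
-/

section GeneralizedLeibniz

variable {R X : Type*} [CommRing R] [AddCommGroup X] [Module R X]

theorem map_mul_eq_zero_of_generalized_leibniz (mul : X →ₗ[R] X →ₗ[R] X) (h : X →ₗ[R] X)
    (hgen : ∀ a b : X, ∃ u v : X, h (mul a b) = mul (h a) u + mul v (h b))
    {a b : X} (ha : h a = 0) (hb : h b = 0) : h (mul a b) = 0 := by
  obtain ⟨u, v, huv⟩ := hgen a b
  rw [huv, ha, hb, map_zero, LinearMap.zero_apply, map_zero, add_zero]

variable {Y : Type*} [AddCommGroup Y] [Module R Y]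

theorem map_mul_of_range_eq_zero (mul : X →ₗ[R] X →ₗ[R] X) (i : Y →ₗ[R] X) (h : X →ₗ[R] X)
    (hgen : ∀ a b : X, ∃ u v : X, h (mul a b) = mul (h a) u + mul v (h b))
    (hhi : h ∘ₗ i = 0) (α β : Y) : h (mul (i α) (i β)) = 0 :=
  map_mul_eq_zero_of_generalized_leibniz mul h hgen
    (LinearMap.congr_fun hhi α) (LinearMap.congr_fun hhi β)

theorem map_differential_mul_of_range_eq_zero
    (A : ℕ → Submodule R X) (B : ℕ → Submodule R Y) [DirectSum.Decomposition B]
    (dX : X →ₗ[R] X) (dY : Y →ₗ[R] Y) (mul : X →ₗ[R] X →ₗ[R] X)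
    (hLeib : ∀ m : ℕ, ∀ x ∈ A m, ∀ y : X,
      dX (mul x y) = mul (dX x) y + ((-1 : ℤ) ^ m) • mul x (dX y))
    (i : Y →ₗ[R] X) (h : X →ₗ[R] X) (hichain : dX ∘ₗ i = i ∘ₗ dY)
    (hideg : ∀ n : ℕ, ∀ y ∈ B n, i y ∈ A n)
    (hgen : ∀ a b : X, ∃ u v : X, h (mul a b) = mul (h a) u + mul v (h b))
    (hhi : h ∘ₗ i = 0) (α β : Y) : h (dX (mul (i α) (i β))) = 0 := by
  have hdXi : ∀ y : Y, dX (i y) = i (dY y) := LinearMap.congr_fun hichain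
  have hvanish := map_mul_of_range_eq_zero mul i h hgen hhi
  induction α using DirectSum.Decomposition.inductionOn B with
  | zero => simp
  | @homogeneous n α =>
    rw [hLeib n _ (hideg n α α.2), map_add, map_zsmul, hdXi, hdXi, hvanish, hvanish,
      smul_zero, add_zero]
  | add α α' hα hα' =>
    rw [map_add, map_add, LinearMap.add_apply, map_add, map_add, hα, hα', add_zero]

end GeneralizedLeibniz

theorem key_vanishing_general {R X Y : Type*} [CommRing R]
    [AddCommGroup X] [Module R X] [AddCommGroup Y] [Module R Y]
    -- gradings of the complexes X and Y
    (A : ℕ → Submodule R X) (B : ℕ → Submodule R Y)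
    [DirectSum.Decomposition B]
    -- the differentials
    (dX : X →ₗ[R] X) (dY : Y →ₗ[R] Y)
    -- the dg algebra structure on X : bilinear, unital, associative product
    -- compatible with the grading and satisfying the Leibniz rule
    (mul : X →ₗ[R] X →ₗ[R] X)
    (hLeib : ∀ m : ℕ, ∀ x ∈ A m, ∀ y : X,
      dX (mul x y) = mul (dX x) y + ((-1 : ℤ) ^ m) • mul x (dX y))
    -- the deformation retract (i, p, h)
    (i : Y →ₗ[R] X) (h : X →ₗ[R] X)
    (hichain : dX ∘ₗ i = i ∘ₗ dY)
    (hideg : ∀ n : ℕ, ∀ y ∈ B n, i y ∈ A n)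
    -- h satisfies the generalized Leibniz rule : h(ab) ∈ h(a)·X + X·h(b)
    (hgen : ∀ a b : X, ∃ u v : X, h (mul a b) = mul (h a) u + mul v (h b))
    -- h ∘ i = 0
    (hhi : h ∘ₗ i = 0) :
    -- the key vanishing : (dX ∘ h + h ∘ dX) (i α · i β) = 0
    ∀ α β : Y,
      dX (h (mul (i α) (i β))) + h (dX (mul (i α) (i β))) = 0 := by
  intro α β
  rw [map_mul_of_range_eq_zero mul i h hgen hhi, map_zero, zero_add,
    map_differential_mul_of_range_eq_zero A B dX dY mul hLeib i h hichain hideg hgen hhi]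

theorem key_vanishing {R X Y : Type*} [CommRing R]
    [AddCommGroup X] [Module R X] [AddCommGroup Y] [Module R Y]
    -- gradings of the complexes X and Y
    (A : ℕ → Submodule R X) (B : ℕ → Submodule R Y)
    [DirectSum.Decomposition A] [DirectSum.Decomposition B]
    -- the differentials
    (dX : X →ₗ[R] X) (dY : Y →ₗ[R] Y)
    (hdX2 : dX ∘ₗ dX = 0) (hdY2 : dY ∘ₗ dY = 0)
    (hdXdeg : ∀ n : ℕ, ∀ x ∈ A (n + 1), dX x ∈ A n)
    (hdX0 : ∀ x ∈ A 0, dX x = 0)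
    (hdYdeg : ∀ n : ℕ, ∀ y ∈ B (n + 1), dY y ∈ B n)
    (hdY0 : ∀ y ∈ B 0, dY y = 0)
    -- the dg algebra structure on X : bilinear, unital, associative product
    -- compatible with the grading and satisfying the Leibniz rule
    (mul : X →ₗ[R] X →ₗ[R] X) (one : X) (hone : one ∈ A 0)
    (hone_l : ∀ x, mul one x = x) (hone_r : ∀ x, mul x one = x)
    (hassoc : ∀ x y z : X, mul (mul x y) z = mul x (mul y z))
    (hmuldeg : ∀ m n : ℕ, ∀ x ∈ A m, ∀ y ∈ A n, mul x y ∈ A (m + n))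
    (hLeib : ∀ m : ℕ, ∀ x ∈ A m, ∀ y : X,
      dX (mul x y) = mul (dX x) y + ((-1 : ℤ) ^ m) • mul x (dX y))
    -- the deformation retract (i, p, h)
    (i : Y →ₗ[R] X) (p : X →ₗ[R] Y) (h : X →ₗ[R] X)
    (hichain : dX ∘ₗ i = i ∘ₗ dY) (hpchain : dY ∘ₗ p = p ∘ₗ dX)
    (hideg : ∀ n : ℕ, ∀ y ∈ B n, i y ∈ A n)
    (hpdeg : ∀ n : ℕ, ∀ x ∈ A n, p x ∈ B n)
    (hhdeg : ∀ n : ℕ, ∀ x ∈ A n, h x ∈ A (n + 1))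
    (hpi : p ∘ₗ i = LinearMap.id)
    (hip : i ∘ₗ p = LinearMap.id + dX ∘ₗ h + h ∘ₗ dX)
    -- h satisfies the generalized Leibniz rule : h(ab) ∈ h(a)·X + X·h(b)
    (hgen : ∀ a b : X, ∃ u v : X, h (mul a b) = mul (h a) u + mul v (h b))
    -- h ∘ i = 0
    (hhi : h ∘ₗ i = 0) :
    -- the key vanishing : (dX ∘ h + h ∘ dX) (i α · i β) = 0
    ∀ α β : Y,
      dX (h (mul (i α) (i β))) + h (dX (mul (i α) (i β))) = 0 :=
  key_vanishing_general A B dX dY mul hLeib i h hichain hideg hgen hhi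
end

section
/- Let X be a dg algebra with a deformation retract (i, p, h) onto Y such that h satisfies the generalized Leibniz rule and h∘i = 0. Endow Y with the product α·β := p(i(α)·i(β)). Then i : Y → X is a homomorphism of algebras: i(α·β) = i(α)·i(β) for all α, β ∈ Y. -/
/-!
Since `h ∘ i = 0` and `h` satisfies the generalized Leibniz rule, the kernel of `h` contains the
image of `i` and is closed under multiplication; as `i` is a chain map, the Leibniz rule for `dX`
shows that `dX (i α · i β)` lies in it as well. Applying `i ∘ p = 1 + dX h + h dX` to
`x = i α · i β` therefore gives `i (p x) = x`.
-/

section DeformationRetract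

variable {R X Y : Type*} [CommRing R] [AddCommGroup X] [Module R X] [AddCommGroup Y] [Module R Y]

theorem mul_mem_ker_of_genLeibniz {mul : X →ₗ[R] X →ₗ[R] X} {h : X →ₗ[R] X}
    (hgen : ∀ a b : X, ∃ u v : X, h (mul a b) = mul (h a) u + mul v (h b))
    {a b : X} (ha : a ∈ LinearMap.ker h) (hb : b ∈ LinearMap.ker h) :
    mul a b ∈ LinearMap.ker h := by
  obtain ⟨u, v, huv⟩ := hgen a b
  rw [LinearMap.mem_ker] at ha hb ⊢
  simp [huv, ha, hb]

theorem dX_mul_mem_of_mem {A : ℕ → Submodule R X} {dX : X →ₗ[R] X} {mul : X →ₗ[R] X →ₗ[R] X}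
    (hLeib : ∀ m : ℕ, ∀ x ∈ A m, ∀ y : X,
      dX (mul x y) = mul (dX x) y + ((-1 : ℤ) ^ m) • mul x (dX y))
    (K : Submodule R X) (hK : ∀ a ∈ K, ∀ b ∈ K, mul a b ∈ K)
    {m : ℕ} {x y : X} (hxA : x ∈ A m) (hx : x ∈ K) (hdx : dX x ∈ K) (hy : y ∈ K)
    (hdy : dX y ∈ K) :
    dX (mul x y) ∈ K := by
  rw [hLeib m x hxA y]
  exact K.add_mem (hK _ hdx _ hy) (K.smul_of_tower_mem _ (hK _ hx _ hdy))

theorem map_dX_mul_eq_zero (B : ℕ → Submodule R Y) [DirectSum.Decomposition B]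
    {A : ℕ → Submodule R X} {dX : X →ₗ[R] X} {dY : Y →ₗ[R] Y} {mul : X →ₗ[R] X →ₗ[R] X}
    {i : Y →ₗ[R] X} {h : X →ₗ[R] X}
    (hLeib : ∀ m : ℕ, ∀ x ∈ A m, ∀ y : X,
      dX (mul x y) = mul (dX x) y + ((-1 : ℤ) ^ m) • mul x (dX y))
    (hichain : dX ∘ₗ i = i ∘ₗ dY) (hideg : ∀ n : ℕ, ∀ y ∈ B n, i y ∈ A n)
    (hgen : ∀ a b : X, ∃ u v : X, h (mul a b) = mul (h a) u + mul v (h b))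
    (hhi : h ∘ₗ i = 0) (α β : Y) :
    h (dX (mul (i α) (i β))) = 0 := by
  have hi_ker : ∀ y : Y, i y ∈ LinearMap.ker h := fun y => LinearMap.congr_fun hhi y
  have hdi_ker : ∀ y : Y, dX (i y) ∈ LinearMap.ker h := fun y => by
    rw [← LinearMap.comp_apply, hichain]
    exact hi_ker (dY y)
  induction α using DirectSum.Decomposition.inductionOn B with
  | zero => simp
  | homogeneous α =>
    exact dX_mul_mem_of_mem hLeib _ (fun _ ha _ hb => mul_mem_ker_of_genLeibniz hgen ha hb)
      (hideg _ α α.2) (hi_ker α) (hdi_ker α) (hi_ker β) (hdi_ker β)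
  | add α α' hα hα' => simp only [map_add, LinearMap.add_apply, hα, hα', add_zero]

theorem ip_apply_eq_self {dX h : X →ₗ[R] X} {i : Y →ₗ[R] X} {p : X →ₗ[R] Y}
    (hip : i ∘ₗ p = LinearMap.id + dX ∘ₗ h + h ∘ₗ dX) {x : X} (hx : h x = 0) (hdx : h (dX x) = 0) :
    i (p x) = x := by
  simpa [hx, hdx] using LinearMap.congr_fun hip x

end DeformationRetract

theorem i_is_algebra_homomorphism_general {R X Y : Type*} [CommRing R]
    [AddCommGroup X] [Module R X] [AddCommGroup Y] [Module R Y]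
    -- gradings of the complexes X and Y
    (A : ℕ → Submodule R X) (B : ℕ → Submodule R Y)
    [DirectSum.Decomposition B]
    -- the differentials
    (dX : X →ₗ[R] X) (dY : Y →ₗ[R] Y)
    -- the dg algebra structure on X : bilinear, unital, associative product
    -- compatible with the grading and satisfying the Leibniz rule
    (mul : X →ₗ[R] X →ₗ[R] X)
    (hLeib : ∀ m : ℕ, ∀ x ∈ A m, ∀ y : X,
      dX (mul x y) = mul (dX x) y + ((-1 : ℤ) ^ m) • mul x (dX y))
    -- the deformation retract (i, p, h)
    (i : Y →ₗ[R] X) (p : X →ₗ[R] Y) (h : X →ₗ[R] X)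
    (hichain : dX ∘ₗ i = i ∘ₗ dY)
    (hideg : ∀ n : ℕ, ∀ y ∈ B n, i y ∈ A n)
    (hip : i ∘ₗ p = LinearMap.id + dX ∘ₗ h + h ∘ₗ dX)
    -- h satisfies the generalized Leibniz rule : h(ab) ∈ h(a)·X + X·h(b)
    (hgen : ∀ a b : X, ∃ u v : X, h (mul a b) = mul (h a) u + mul v (h b))
    -- h ∘ i = 0
    (hhi : h ∘ₗ i = 0) :
    -- i is multiplicative for the product α·β := p (i α · i β) on Y :
    -- i (α·β) = i α · i β
    ∀ α β : Y, i (p (mul (i α) (i β))) = mul (i α) (i β) := by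
  intro α β
  have hi_ker : ∀ y : Y, h (i y) = 0 := LinearMap.congr_fun hhi
  exact ip_apply_eq_self hip (mul_mem_ker_of_genLeibniz hgen (hi_ker α) (hi_ker β))
    (map_dX_mul_eq_zero B hLeib hichain hideg hgen hhi α β)

theorem i_is_algebra_homomorphism {R X Y : Type*} [CommRing R]
    [AddCommGroup X] [Module R X] [AddCommGroup Y] [Module R Y]
    -- gradings of the complexes X and Y
    (A : ℕ → Submodule R X) (B : ℕ → Submodule R Y)
    [DirectSum.Decomposition A] [DirectSum.Decomposition B]
    -- the differentials
    (dX : X →ₗ[R] X) (dY : Y →ₗ[R] Y)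
    (hdX2 : dX ∘ₗ dX = 0) (hdY2 : dY ∘ₗ dY = 0)
    (hdXdeg : ∀ n : ℕ, ∀ x ∈ A (n + 1), dX x ∈ A n)
    (hdX0 : ∀ x ∈ A 0, dX x = 0)
    (hdYdeg : ∀ n : ℕ, ∀ y ∈ B (n + 1), dY y ∈ B n)
    (hdY0 : ∀ y ∈ B 0, dY y = 0)
    -- the dg algebra structure on X : bilinear, unital, associative product
    -- compatible with the grading and satisfying the Leibniz rule
    (mul : X →ₗ[R] X →ₗ[R] X) (one : X) (hone : one ∈ A 0)
    (hone_l : ∀ x, mul one x = x) (hone_r : ∀ x, mul x one = x)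
    (hassoc : ∀ x y z : X, mul (mul x y) z = mul x (mul y z))
    (hmuldeg : ∀ m n : ℕ, ∀ x ∈ A m, ∀ y ∈ A n, mul x y ∈ A (m + n))
    (hLeib : ∀ m : ℕ, ∀ x ∈ A m, ∀ y : X,
      dX (mul x y) = mul (dX x) y + ((-1 : ℤ) ^ m) • mul x (dX y))
    -- the deformation retract (i, p, h)
    (i : Y →ₗ[R] X) (p : X →ₗ[R] Y) (h : X →ₗ[R] X)
    (hichain : dX ∘ₗ i = i ∘ₗ dY) (hpchain : dY ∘ₗ p = p ∘ₗ dX)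
    (hideg : ∀ n : ℕ, ∀ y ∈ B n, i y ∈ A n)
    (hpdeg : ∀ n : ℕ, ∀ x ∈ A n, p x ∈ B n)
    (hhdeg : ∀ n : ℕ, ∀ x ∈ A n, h x ∈ A (n + 1))
    (hpi : p ∘ₗ i = LinearMap.id)
    (hip : i ∘ₗ p = LinearMap.id + dX ∘ₗ h + h ∘ₗ dX)
    -- h satisfies the generalized Leibniz rule : h(ab) ∈ h(a)·X + X·h(b)
    (hgen : ∀ a b : X, ∃ u v : X, h (mul a b) = mul (h a) u + mul v (h b))
    -- h ∘ i = 0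
    (hhi : h ∘ₗ i = 0) :
    -- i is multiplicative for the product α·β := p (i α · i β) on Y :
    -- i (α·β) = i α · i β
    ∀ α β : Y, i (p (mul (i α) (i β))) = mul (i α) (i β) :=
  i_is_algebra_homomorphism_general A B dX dY mul hLeib i p h hichain hideg hip hgen hhi
end

section
/- The scaled de Rham map σ satisfies the scaled Leibniz rule: for α ∈ Λ^i ⊗ S_a and β ∈ Λ^j ⊗ S_b with i+a+j+b > 0 (and characteristic 0 or p ≥ i+a+j+b), σ(αβ) = (1/(i+a+j+b)) · ((i+a)·σ(α)·β + (-1)^i (j+b)·α·σ(β)), where the product is the tensor product of the exterior algebra product and the polynomial product. -/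
/-!
On `Λ^i ⊗ S_m` the scaled map is `σ = d / (i + m)`, where `d = Σ_j e_j ∧ (−) ⊗ ∂/∂y_j` is the
de Rham differential. `d` is a graded derivation, `d(αβ) = dα·β + (-1)^i α·dβ`; substituting
`dα = (i + a) σα` and `dβ = (j + b) σβ` and dividing by `i + a + j + b` gives the scaled rule.
By bilinearity everything reduces to basis monomials, where the Leibniz rule for `d` is a
bookkeeping of the Koszul signs produced by inserting `e_x` into a merged wedge `e_s ∧ e_t`.
-/

/-
Concrete model of the bigraded module 𝕊 = ⊕ Λ^i ⊗_R S_m, where Λ is the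
exterior algebra over R on e_1,…,e_n and S = R[y_1,…,y_n]:
the free R-module with basis the pairs (s, μ) of a finset s ⊆ Fin n (the
wedge monomial e_s, sorted increasingly) and a multiset μ over Fin n (the
monomial y_μ).  The exterior degree is s.card and the polynomial degree is
Multiset.card μ.
-/

open Finsupp

variable (n : ℕ) (R : Type*) [CommRing R] [Algebra ℚ R]

/-- Basis of Λ ⊗ S: a wedge monomial (finset) and a polynomial monomial
(multiset). -/
abbrev KBasis := Finset (Fin n) × Multiset (Fin n)

/-- The free module Λ ⊗_R S on that basis. -/
abbrev KMod := KBasis n →₀ R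

/-- The sign (-1)^{#{b ∈ s | b < t}} produced by inserting `e_t` into the
sorted wedge monomial `e_s` in front position t. -/
def ksgn (s : Finset (Fin n)) (t : Fin n) : ℤ := (-1) ^ (s.filter (· < t)).card

/-- Extend a basis-indexed family of values to an R-linear endomorphism. -/
noncomputable def klift (f : KBasis n → KMod n R) : KMod n R →ₗ[R] KMod n R :=
  Finsupp.lsum ℕ fun p => LinearMap.toSpanSingleton R (KMod n R) (f p)

/-- Value of the contraction κ on a basis element:
κ(e_{t_1}∧⋯∧e_{t_i} ⊗ f) = Σ_j (-1)^j e_{t_1}∧⋯∧ê_{t_j}∧⋯∧e_{t_i} ⊗ y_{t_j}f. -/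
noncomputable def kappaB (p : KBasis n) : KMod n R :=
  ∑ t ∈ p.1, (-(ksgn n p.1 t)) • Finsupp.single (p.1.erase t, t ::ₘ p.2) (1 : R)

/-- The contraction κ : Λ^i ⊗ S_m → Λ^{i-1} ⊗ S_{m+1} (as a single R-linear
endomorphism of the total module). -/
noncomputable def kappa : KMod n R →ₗ[R] KMod n R := klift n R (kappaB n R)

/-- Value of the scaled de Rham map σ on a basis element:
σ(e_{t_1}∧⋯∧e_{t_i} ⊗ y_{p_1}⋯y_{p_m})
  = (1/(i+m)) Σ_j e_{p_j}∧e_{t_1}∧⋯∧e_{t_i} ⊗ y_{p_1}⋯ŷ_{p_j}⋯y_{p_m},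
zero when i = m = 0 (and wedges with repeated factors are zero). -/
noncomputable def sigmaB (p : KBasis n) : KMod n R :=
  ((p.1.card + Multiset.card p.2 : ℚ))⁻¹ •
    (p.2.map (fun t =>
      if t ∈ p.1 then (0 : KMod n R)
      else (ksgn n p.1 t) • Finsupp.single (insert t p.1, p.2.erase t) (1 : R))).sum

/-- The scaled de Rham map σ = (1/(i+m)) Σ_j e_j ∧ (−) ⊗ ∂/∂y_j :
Λ^i ⊗ S_m → Λ^{i+1} ⊗ S_{m-1}. -/
noncomputable def sigma : KMod n R →ₗ[R] KMod n R := klift n R (sigmaB n R)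

/-- `IsHomog i m x` : x lies in the bihomogeneous component Λ^i ⊗ S_m. -/
def IsHomog (i m : ℕ) (x : KMod n R) : Prop :=
  ∀ p ∈ x.support, p.1.card = i ∧ Multiset.card p.2 = m

/-- The Koszul sign for merging the sorted wedge monomial e_s with e_t
(moving each e_a, a ∈ t, past the larger elements of s). -/
def mulsgn (s t : Finset (Fin n)) : ℤ :=
  (-1) ^ (∑ a ∈ t, (s.filter (a < ·)).card)

/-- The product on Λ ⊗ S on basis elements: wedge the exterior parts (zero if
they share a factor) and multiply the polynomial parts. -/
noncomputable def mulB (p q : KBasis n) : KMod n R :=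
  if Disjoint p.1 q.1 then
    (mulsgn n p.1 q.1) • Finsupp.single (p.1 ∪ q.1, p.2 + q.2) (1 : R)
  else 0

/-- The (bilinear) product on Λ ⊗ S. -/
noncomputable def kmul : KMod n R →ₗ[R] KMod n R →ₗ[R] KMod n R :=
  Finsupp.lsum ℕ fun p =>
    LinearMap.toSpanSingleton R (KMod n R →ₗ[R] KMod n R) (klift n R (mulB n R p))

/-- The summand of d = Σ_j e_j ∧ (−) ⊗ ∂/∂y_j at one factor `y_t` of the monomial; summing over
the factors of the multiset produces the multiplicities of the partial derivatives. -/
noncomputable def deRhamTerm (p : KBasis n) (t : Fin n) : KMod n R :=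
  if t ∈ p.1 then 0 else ksgn n p.1 t • single (insert t p.1, p.2.erase t) 1

noncomputable def deRhamB (p : KBasis n) : KMod n R := (p.2.map (deRhamTerm n R p)).sum

noncomputable def deRham : KMod n R →ₗ[R] KMod n R := klift n R (deRhamB n R)

section Signs

variable {n : ℕ}

lemma card_filter_lt_insert (s : Finset (Fin n)) {x : Fin n} (hx : x ∉ s) (a : Fin n) :
    ((insert x s).filter (a < ·)).card = (s.filter (a < ·)).card + if a < x then 1 else 0 := by
  rw [Finset.filter_insert]
  split_ifs
  · rw [Finset.card_insert_of_notMem (by simp [hx])]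
  · simp

lemma card_filter_lt_add_card_filter_gt (s : Finset (Fin n)) {x : Fin n} (hx : x ∉ s) :
    (s.filter (· < x)).card + (s.filter (x < ·)).card = s.card := by
  rw [← Finset.card_filter_add_card_filter_not (s := s) (p := (· < x))]
  congr 2
  refine Finset.filter_congr fun a ha => ?_
  rw [not_lt]
  exact ⟨le_of_lt, fun h => lt_of_le_of_ne h (by rintro rfl; exact hx ha)⟩

lemma mulsgn_mul_ksgn_union_left {s t : Finset (Fin n)} (hd : Disjoint s t) {x : Fin n}
    (hx : x ∉ s ∪ t) :
    mulsgn n s t * ksgn n (s ∪ t) x = ksgn n s x * mulsgn n (insert x s) t := by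
  have hxs : x ∉ s := fun h => hx (Finset.mem_union_left _ h)
  have hcount : ∑ a ∈ t, (if a < x then 1 else 0) = (t.filter (· < x)).card := by
    rw [Finset.card_filter]
  unfold mulsgn ksgn
  rw [← pow_add, ← pow_add, Finset.filter_union,
    Finset.card_union_of_disjoint (Finset.disjoint_filter_filter hd),
    Finset.sum_congr rfl fun a _ => card_filter_lt_insert s hxs a, Finset.sum_add_distrib]
  congr 1
  omega

/-- Moving `e_x` past the whole of `e_s` costs the extra sign `(-1)^|s|`. -/
lemma ksgn_mul_mulsgn_insert_right {s t : Finset (Fin n)} (hd : Disjoint s t) {x : Fin n}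
    (hx : x ∉ s ∪ t) :
    ksgn n t x * mulsgn n s (insert x t) = (-1) ^ s.card * (mulsgn n s t * ksgn n (s ∪ t) x) := by
  have hxs : x ∉ s := fun h => hx (Finset.mem_union_left _ h)
  have hxt : x ∉ t := fun h => hx (Finset.mem_union_right _ h)
  have hsplit := card_filter_lt_add_card_filter_gt s hxs
  unfold mulsgn ksgn
  rw [← pow_add, ← pow_add, ← pow_add, Finset.filter_union,
    Finset.card_union_of_disjoint (Finset.disjoint_filter_filter hd), Finset.sum_insert hxt]
  have hexp : s.card + (∑ a ∈ t, (s.filter (a < ·)).card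
        + ((s.filter (· < x)).card + (t.filter (· < x)).card))
      = ((t.filter (· < x)).card + ((s.filter (x < ·)).card + ∑ a ∈ t, (s.filter (a < ·)).card))
        + 2 * (s.filter (· < x)).card := by
    omega
  rw [hexp, pow_add _ _ (2 * _), pow_mul, neg_one_sq, one_pow, mul_one]

end Signs

section Products

variable {n : ℕ} {R : Type*} [CommRing R]

@[simp]
lemma klift_single (f : KBasis n → KMod n R) (p : KBasis n) (r : R) :
    klift n R f (single p r) = r • f p := by
  simp [klift]

lemma kmul_single_single (p q : KBasis n) (c d : R) :
    kmul n R (single p c) (single q d) = c • d • mulB n R p q := by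
  simp [kmul]

lemma deRham_single (p : KBasis n) (r : R) : deRham n R (single p r) = r • deRhamB n R p :=
  klift_single _ p r

lemma kmul_deRhamTerm_single {p q : KBasis n} (hd : Disjoint p.1 q.1) {t : Fin n} (ht : t ∈ p.2) :
    kmul n R (deRhamTerm n R p t) (single q 1) =
      mulsgn n p.1 q.1 • deRhamTerm n R (p.1 ∪ q.1, p.2 + q.2) t := by
  by_cases htp : t ∈ p.1
  · simp [deRhamTerm, htp]
  by_cases htq : t ∈ q.1
  · have hnd : ¬Disjoint (insert t p.1) q.1 := fun h => Finset.disjoint_left.mp h (by simp) htq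
    simp [deRhamTerm, htp, htq, kmul_single_single, mulB, hnd]
  have hdt : Disjoint (insert t p.1) q.1 := Finset.disjoint_insert_left.mpr ⟨htq, hd⟩
  have htu : t ∉ p.1 ∪ q.1 := by simp [htp, htq]
  simp only [deRhamTerm, if_neg htp, if_neg htu, map_zsmul, LinearMap.smul_apply,
    kmul_single_single, one_smul, mulB, if_pos hdt, smul_smul, ← Finset.insert_union,
    Multiset.erase_add_left_pos _ ht, mulsgn_mul_ksgn_union_left hd htu]

lemma kmul_single_deRhamTerm {p q : KBasis n} (hd : Disjoint p.1 q.1) {t : Fin n} (ht : t ∈ q.2) :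
    kmul n R (single p 1) (deRhamTerm n R q t) =
      ((-1) ^ p.1.card * mulsgn n p.1 q.1) • deRhamTerm n R (p.1 ∪ q.1, p.2 + q.2) t := by
  by_cases htq : t ∈ q.1
  · simp [deRhamTerm, htq]
  by_cases htp : t ∈ p.1
  · have hnd : ¬Disjoint p.1 (insert t q.1) := fun h => Finset.disjoint_left.mp h htp (by simp)
    simp [deRhamTerm, htp, htq, kmul_single_single, mulB, hnd]
  have hdt : Disjoint p.1 (insert t q.1) := Finset.disjoint_insert_right.mpr ⟨htp, hd⟩
  have htu : t ∉ p.1 ∪ q.1 := by simp [htp, htq]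
  simp only [deRhamTerm, if_neg htq, if_neg htu, map_zsmul, kmul_single_single, one_smul, mulB,
    if_pos hdt, smul_smul, ← Finset.union_insert, Multiset.erase_add_right_pos _ ht,
    ksgn_mul_mulsgn_insert_right hd htu, mul_assoc]

lemma kmul_deRhamTerm_single_of_not_disjoint {p q : KBasis n} (hd : ¬Disjoint p.1 q.1)
    (t : Fin n) : kmul n R (deRhamTerm n R p t) (single q 1) = 0 := by
  have hnd : ¬Disjoint (insert t p.1) q.1 := fun h => hd (h.mono_left (Finset.subset_insert t _))
  by_cases htp : t ∈ p.1 <;> simp [deRhamTerm, htp, kmul_single_single, mulB, hnd]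

lemma kmul_single_deRhamTerm_of_not_disjoint {p q : KBasis n} (hd : ¬Disjoint p.1 q.1)
    (t : Fin n) : kmul n R (single p 1) (deRhamTerm n R q t) = 0 := by
  have hnd : ¬Disjoint p.1 (insert t q.1) := fun h => hd (h.mono_right (Finset.subset_insert t _))
  by_cases htq : t ∈ q.1 <;> simp [deRhamTerm, htq, kmul_single_single, mulB, hnd]

lemma deRham_mulB (p q : KBasis n) :
    deRham n R (mulB n R p q) = kmul n R (deRhamB n R p) (single q 1) +
      (-1 : ℤ) ^ p.1.card • kmul n R (single p 1) (deRhamB n R q) := by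
  have hleft : kmul n R (deRhamB n R p) (single q 1) =
      (p.2.map fun t => kmul n R (deRhamTerm n R p t) (single q 1)).sum := by
    rw [deRhamB, ← LinearMap.flip_apply, map_multiset_sum, Multiset.map_map]
    rfl
  have hright : kmul n R (single p 1) (deRhamB n R q) =
      (q.2.map fun t => kmul n R (single p 1) (deRhamTerm n R q t)).sum := by
    rw [deRhamB, map_multiset_sum, Multiset.map_map]
    rfl
  rw [hleft, hright]
  by_cases hd : Disjoint p.1 q.1
  · rw [mulB, if_pos hd, map_zsmul, deRham_single, one_smul, deRhamB, Multiset.map_add,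
      Multiset.sum_add, smul_add, Multiset.smul_sum, Multiset.smul_sum, Multiset.smul_sum,
      Multiset.map_map, Multiset.map_map, Multiset.map_map]
    congr 2
    · exact Multiset.map_congr rfl fun t ht => (kmul_deRhamTerm_single hd ht).symm
    · exact Multiset.map_congr rfl fun t ht => by
        rw [Function.comp_apply, Function.comp_apply, kmul_single_deRhamTerm hd ht, smul_smul,
          ← mul_assoc, ← mul_pow, neg_one_mul, neg_neg, one_pow, one_mul]
  · simp [mulB, hd, kmul_deRhamTerm_single_of_not_disjoint hd,
      kmul_single_deRhamTerm_of_not_disjoint hd]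

end Products

def totalDeg {n : ℕ} (p : KBasis n) : ℕ := p.1.card + Multiset.card p.2

section Scaled

variable {n : ℕ} {R : Type*} [CommRing R] [Algebra ℚ R]

lemma sigma_single (p : KBasis n) (r : R) : sigma n R (single p r) = r • sigmaB n R p :=
  klift_single _ p r

lemma sigmaB_eq_inv_smul (p : KBasis n) :
    sigmaB n R p = ((totalDeg p : ℕ) : ℚ)⁻¹ • deRhamB n R p := by
  rw [totalDeg, Nat.cast_add]
  rfl

lemma totalDeg_smul_sigmaB (p : KBasis n) :
    ((totalDeg p : ℕ) : ℚ) • sigmaB n R p = deRhamB n R p := by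
  rw [sigmaB_eq_inv_smul]
  by_cases h : totalDeg p = 0
  · have hp : p.2 = 0 := Multiset.card_eq_zero.mp (by unfold totalDeg at h; omega)
    simp [deRhamB, hp]
  · exact smul_inv_smul₀ (Nat.cast_ne_zero.mpr h) _

lemma sigma_mulB_eq_inv_smul_deRham (p q : KBasis n) :
    sigma n R (mulB n R p q) =
      ((totalDeg p + totalDeg q : ℕ) : ℚ)⁻¹ • deRham n R (mulB n R p q) := by
  by_cases hd : Disjoint p.1 q.1
  · have hdeg : totalDeg (p.1 ∪ q.1, p.2 + q.2) = totalDeg p + totalDeg q := by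
      simp only [totalDeg, Finset.card_union_of_disjoint hd, Multiset.card_add]
      ring
    rw [mulB, if_pos hd, map_zsmul, map_zsmul, sigma_single, deRham_single, one_smul, one_smul,
      sigmaB_eq_inv_smul, hdeg, smul_comm]
  · simp [mulB, hd]

lemma sigma_mulB (p q : KBasis n) :
    sigma n R (mulB n R p q) = ((totalDeg p + totalDeg q : ℕ) : ℚ)⁻¹ •
      (((totalDeg p : ℕ) : ℚ) • kmul n R (sigmaB n R p) (single q 1) +
        ((-1 : ℚ) ^ p.1.card * ((totalDeg q : ℕ) : ℚ)) • kmul n R (single p 1) (sigmaB n R q)) := by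
  rw [sigma_mulB_eq_inv_smul_deRham, deRham_mulB, ← totalDeg_smul_sigmaB p,
    ← totalDeg_smul_sigmaB q, LinearMap.map_smul_of_tower, LinearMap.smul_apply,
    LinearMap.map_smul_of_tower, ← Int.cast_smul_eq_zsmul ℚ, smul_smul]
  push_cast
  rfl

lemma sigma_kmul_single_single (p q : KBasis n) (c d : R) :
    sigma n R (kmul n R (single p c) (single q d)) = ((totalDeg p + totalDeg q : ℕ) : ℚ)⁻¹ •
      (((totalDeg p : ℕ) : ℚ) • kmul n R (sigma n R (single p c)) (single q d) +
        ((-1 : ℚ) ^ p.1.card * ((totalDeg q : ℕ) : ℚ)) •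
          kmul n R (single p c) (sigma n R (single q d))) := by
  have hp : (single p c : KMod n R) = c • single p 1 := by rw [smul_single_one]
  have hq : (single q d : KMod n R) = d • single q 1 := by rw [smul_single_one]
  rw [kmul_single_single, map_smul, map_smul, sigma_mulB, sigma_single, sigma_single, hp, hq]
  simp only [map_smul, LinearMap.smul_apply]
  module

end Scaled

theorem sigma_scaled_Leibniz :
    ∀ i a j b : ℕ, 0 < i + a + j + b →
      ∀ α β : KMod n R, IsHomog n R i a α → IsHomog n R j b β →
        sigma n R (kmul n R α β) =
          ((i + a + j + b : ℚ))⁻¹ •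
            (((i + a : ℚ)) • kmul n R (sigma n R α) β +
              (((-1 : ℚ) ^ i) * ((j : ℚ) + b)) • kmul n R α (sigma n R β)) := by
  intro i a j b _ α β hα hβ
  rw [← Finsupp.sum_single α, ← Finsupp.sum_single β]
  simp only [Finsupp.sum, map_sum, LinearMap.sum_apply, Finset.smul_sum, ← Finset.sum_add_distrib]
  refine Finset.sum_congr rfl fun q hq => Finset.sum_congr rfl fun p hp => ?_
  obtain ⟨hpi, hpa⟩ := hα p hp
  obtain ⟨hqj, hqb⟩ := hβ q hq
  rw [sigma_kmul_single_single, totalDeg, totalDeg, hpi, hpa, hqj, hqb]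
  push_cast
  rw [← add_assoc]
end

section
/- Let (i, p, h) be a special deformation retract between (X, ∂^X) and (Y, ∂^Y) — i.e., p∘i = 1, i∘p = 1 + ∂^X h + h∂^X, and h∘i = 0, p∘h = 0, h² = 0 — and let δ be a small perturbation of ∂^X with δ∘h locally nilpotent. Define A = (1 − δh)^{-1}δ, i_∞ = i + hAi, p_∞ = p + pAh, h_∞ = h + hAh. Then p_∞ ∘ i_∞ = 1, h_∞ ∘ i_∞ = 0, p_∞ ∘ h_∞ = 0, and h_∞² = 0. -/
/-
Perturbation Lemma, preservation of the side conditions: given a *special*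
deformation retract (p∘i = 1, i∘p = 1 + dX∘h + h∘dX, h∘i = 0, p∘h = 0,
h² = 0) and a small perturbation δ of dX (so (dX+δ)² = 0 and 1 - δ∘h is
invertible, e.g. with δ∘h elementwise nilpotent), set A = (1 - δh)⁻¹ ∘ δ and
  i_∞ = i + h∘A∘i,  p_∞ = p + p∘A∘h,  h_∞ = h + h∘A∘h.
Then p_∞ ∘ i_∞ = 1, h_∞ ∘ i_∞ = 0, p_∞ ∘ h_∞ = 0 and h_∞² = 0.
Here g denotes the inverse of 1 - δ∘h, so A = g ∘ δ.
-/
theorem perturbed_special_deformation_retract {R X Y : Type*} [CommRing R]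
    [AddCommGroup X] [Module R X] [AddCommGroup Y] [Module R Y]
    (dX : X →ₗ[R] X) (dY : Y →ₗ[R] Y)
    (hdX2 : dX ∘ₗ dX = 0) (hdY2 : dY ∘ₗ dY = 0)
    (i : Y →ₗ[R] X) (p : X →ₗ[R] Y) (h : X →ₗ[R] X)
    (hichain : dX ∘ₗ i = i ∘ₗ dY) (hpchain : dY ∘ₗ p = p ∘ₗ dX)
    (hpi : p ∘ₗ i = LinearMap.id)
    (hip : i ∘ₗ p = LinearMap.id + dX ∘ₗ h + h ∘ₗ dX)
    -- the side conditions of a special deformation retract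
    (hhi : h ∘ₗ i = 0) (hph : p ∘ₗ h = 0) (hhh : h ∘ₗ h = 0)
    -- the small perturbation δ
    (δ : X →ₗ[R] X) (hperturb : (dX + δ) ∘ₗ (dX + δ) = 0)
    (hnil : ∀ x : X, ∃ N : ℕ, ((δ ∘ₗ h : X →ₗ[R] X) ^ N) x = 0)
    -- g = (1 - δ∘h)⁻¹
    (g : X →ₗ[R] X)
    (hg1 : g ∘ₗ (LinearMap.id - δ ∘ₗ h) = LinearMap.id)
    (hg2 : (LinearMap.id - δ ∘ₗ h) ∘ₗ g = LinearMap.id) :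
    -- with A = g ∘ δ, the perturbed data is again a special deformation
    -- retract:
    (p + (p ∘ₗ (g ∘ₗ δ)) ∘ₗ h) ∘ₗ (i + (h ∘ₗ (g ∘ₗ δ)) ∘ₗ i) = LinearMap.id ∧
    (h + (h ∘ₗ (g ∘ₗ δ)) ∘ₗ h) ∘ₗ (i + (h ∘ₗ (g ∘ₗ δ)) ∘ₗ i) = 0 ∧
    (p + (p ∘ₗ (g ∘ₗ δ)) ∘ₗ h) ∘ₗ (h + (h ∘ₗ (g ∘ₗ δ)) ∘ₗ h) = 0 ∧
    (h + (h ∘ₗ (g ∘ₗ δ)) ∘ₗ h) ∘ₗ (h + (h ∘ₗ (g ∘ₗ δ)) ∘ₗ h) = 0 := by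
  have e1 : ∀ f : Y →ₗ[R] X, h ∘ₗ (h ∘ₗ f) = 0 := fun f => by
    rw [← LinearMap.comp_assoc, hhh, LinearMap.zero_comp]
  have e2 : ∀ f : X →ₗ[R] X, h ∘ₗ (h ∘ₗ f) = 0 := fun f => by
    rw [← LinearMap.comp_assoc, hhh, LinearMap.zero_comp]
  have e3 : ∀ f : Y →ₗ[R] X, p ∘ₗ (h ∘ₗ f) = 0 := fun f => by
    rw [← LinearMap.comp_assoc, hph, LinearMap.zero_comp]
  have e4 : ∀ f : X →ₗ[R] X, p ∘ₗ (h ∘ₗ f) = 0 := fun f => by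
    rw [← LinearMap.comp_assoc, hph, LinearMap.zero_comp]
  refine ⟨?_, ?_, ?_, ?_⟩ <;>
    simp only [LinearMap.add_comp, LinearMap.comp_add, LinearMap.comp_assoc,
      hhi, hhh, hph, hpi, e1, e2, e3, e4, LinearMap.comp_zero,
      LinearMap.zero_comp, add_zero, zero_add]
end

section
/- Let X be a dg algebra with a special deformation retract (i, p, h) onto Y (pi = 1, ip = 1 + ∂h + h∂, hi = 0, ph = 0, h² = 0) whose homotopy h satisfies the generalized Leibniz rule, and let δ be a small perturbation of ∂^X that itself satisfies the Leibniz rule (so (X, ∂^X + δ) is again a dg algebra with the same product). With i_∞ = i + hAi, p_∞ = p + pAh, h_∞ = h + hAh (A = (1 − δh)^{-1}δ), one has (∂_∞^X h_∞ + h_∞ ∂_∞^X)(i_∞(α)·i_∞(β)) = 0 for all α, β ∈ Y, where ∂_∞^X = ∂^X + δ. -/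
/-
The element `i_∞ y = i y + h(g δ i y)` is killed by `h` (as `h i = 0`, `h² = 0`), and so is
`D (i_∞ y)` for `D = dX + δ`: the side conditions of the retract and `g = 1 + δ h g` make the
four terms of `h D (i_∞ y)` cancel in pairs. The generalized Leibniz rule says that `ker h` is
closed under multiplication. Writing the Leibniz rule as `D (a b) = (D a) b + ε(a) (D b)`, with
`ε` the grading sign, which anticommutes with `h` because `h` has degree one, it also gives
`h (D (a b)) = 0` whenever `a, b, D a, D b ∈ ker h`. Since `h_∞ = h + h g δ h` vanishes on
`ker h`, both terms of `(D h_∞ + h_∞ D)(i_∞ α · i_∞ β)` are zero.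
-/

section GradedDerivation

variable {R X : Type*} [CommRing R] [AddCommGroup X] [Module R X] (A : ℕ → Submodule R X)

def IsGradedDerivation (mul : X →ₗ[R] X →ₗ[R] X) (d : X →ₗ[R] X) : Prop :=
  ∀ m : ℕ, ∀ x ∈ A m, ∀ y : X, d (mul x y) = mul (d x) y + ((-1 : ℤ) ^ m) • mul x (d y)

variable {A} {mul : X →ₗ[R] X →ₗ[R] X} {d d' : X →ₗ[R] X}

theorem IsGradedDerivation.add (hd : IsGradedDerivation A mul d)
    (hd' : IsGradedDerivation A mul d') : IsGradedDerivation A mul (d + d') := by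
  intro m x hx y
  simp only [LinearMap.add_apply, hd m x hx, hd' m x hx, map_add, smul_add]
  abel

variable (A) [DirectSum.Decomposition A]

noncomputable def gradeSign : X →ₗ[R] X :=
  (DirectSum.toModule R ℕ X fun n => ((-1 : R) ^ n • (A n).subtype)) ∘ₗ
    (DirectSum.decomposeLinearEquiv A).toLinearMap

variable {A}

theorem gradeSign_of_mem {n : ℕ} {x : X} (hx : x ∈ A n) : gradeSign A x = (-1 : R) ^ n • x := by
  simp only [gradeSign, LinearMap.comp_apply, LinearEquiv.coe_coe,
    DirectSum.decomposeLinearEquiv_apply]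
  rw [DirectSum.decompose_of_mem A hx, ← DirectSum.lof_eq_of R, DirectSum.toModule_lof]
  simp

theorem map_gradeSign_of_degree_succ {h : X →ₗ[R] X} (hh : ∀ n, ∀ x ∈ A n, h x ∈ A (n + 1))
    (x : X) : h (gradeSign A x) = -gradeSign A (h x) := by
  induction x using DirectSum.Decomposition.inductionOn A with
  | zero => simp
  | @homogeneous n x =>
    rw [gradeSign_of_mem x.2, gradeSign_of_mem (hh n _ x.2), map_smul, pow_succ]
    simp
  | add x₁ x₂ ih₁ ih₂ => simp only [map_add, ih₁, ih₂, neg_add]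

theorem IsGradedDerivation.map_mul (hd : IsGradedDerivation A mul d) (x y : X) :
    d (mul x y) = mul (d x) y + mul (gradeSign A x) (d y) := by
  induction x using DirectSum.Decomposition.inductionOn A with
  | zero => simp
  | @homogeneous m x =>
    rw [hd m _ x.2 y, gradeSign_of_mem x.2, map_smul, LinearMap.smul_apply,
      ← Int.cast_smul_eq_zsmul R ((-1 : ℤ) ^ m)]
    push_cast
    rfl
  | add x₁ x₂ ih₁ ih₂ =>
    simp only [map_add, LinearMap.add_apply, ih₁, ih₂]
    abel

end GradedDerivation

section GeneralizedLeibniz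

variable {R X : Type*} [CommRing R] [AddCommGroup X] [Module R X]
  {mul : X →ₗ[R] X →ₗ[R] X} {h : X →ₗ[R] X}

theorem map_mul_eq_zero_of_genLeibniz
    (hgen : ∀ a b : X, ∃ u v : X, h (mul a b) = mul (h a) u + mul v (h b))
    {a b : X} (ha : h a = 0) (hb : h b = 0) : h (mul a b) = 0 := by
  obtain ⟨u, v, huv⟩ := hgen a b
  simp [huv, ha, hb]

theorem map_derivation_mul_eq_zero_of_genLeibniz {A : ℕ → Submodule R X}
    [DirectSum.Decomposition A] {d : X →ₗ[R] X} (hd : IsGradedDerivation A mul d)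
    (hgen : ∀ a b : X, ∃ u v : X, h (mul a b) = mul (h a) u + mul v (h b))
    (hhdeg : ∀ n, ∀ x ∈ A n, h x ∈ A (n + 1))
    {a b : X} (ha : h a = 0) (hb : h b = 0) (hda : h (d a) = 0) (hdb : h (d b) = 0) :
    h (d (mul a b)) = 0 := by
  have hsa : h (gradeSign A a) = 0 := by
    rw [map_gradeSign_of_degree_succ hhdeg, ha, map_zero, neg_zero]
  rw [hd.map_mul, map_add, map_mul_eq_zero_of_genLeibniz hgen hda hb,
    map_mul_eq_zero_of_genLeibniz hgen hsa hdb, add_zero]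

end GeneralizedLeibniz

section Perturbation

variable {R X Y : Type*} [CommRing R] [AddCommGroup X] [Module R X] [AddCommGroup Y] [Module R Y]
  {i : Y →ₗ[R] X} {h g δ : X →ₗ[R] X}

theorem perturbedHomotopy_apply_eq_zero {x : X} (hx : h x = 0) :
    (h + (h ∘ₗ (g ∘ₗ δ)) ∘ₗ h) x = 0 := by
  simp [hx]

theorem homotopy_perturbedInclusion_eq_zero (hhi : h ∘ₗ i = 0) (hhh : h ∘ₗ h = 0) (y : Y) :
    h ((i + (h ∘ₗ (g ∘ₗ δ)) ∘ₗ i) y) = 0 := by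
  have hi : h (i y) = 0 := by simpa using LinearMap.congr_fun hhi y
  have hh : h (h (g (δ (i y)))) = 0 := by simpa using LinearMap.congr_fun hhh (g (δ (i y)))
  simp [hi, hh]

theorem homotopy_perturbedDifferential_perturbedInclusion_eq_zero {p : X →ₗ[R] Y} {dX : X →ₗ[R] X}
    {dY : Y →ₗ[R] Y} (hichain : dX ∘ₗ i = i ∘ₗ dY)
    (hip : i ∘ₗ p = LinearMap.id + dX ∘ₗ h + h ∘ₗ dX) (hhi : h ∘ₗ i = 0) (hhh : h ∘ₗ h = 0)
    (hg : (LinearMap.id - δ ∘ₗ h) ∘ₗ g = LinearMap.id) (y : Y) :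
    h ((dX + δ) ((i + (h ∘ₗ (g ∘ₗ δ)) ∘ₗ i) y)) = 0 := by
  have hi : ∀ y, h (i y) = 0 := fun y => by simpa using LinearMap.congr_fun hhi y
  have hh : ∀ x, h (h x) = 0 := fun x => by simpa using LinearMap.congr_fun hhh x
  simp only [LinearMap.add_apply, LinearMap.comp_apply, map_add]
  set z := g (δ (i y))
  have h_dX_i : h (dX (i y)) = 0 := by
    simpa [hi] using congrArg h (LinearMap.congr_fun hichain y)
  have h_dX_h : h (dX (h z)) = -h z := by
    have e := congrArg h (LinearMap.congr_fun hip z)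
    simp only [LinearMap.comp_apply, LinearMap.add_apply, LinearMap.id_apply, map_add, hi,
      hh, add_zero] at e
    rw [eq_neg_iff_add_eq_zero, add_comm, ← e]
  have δ_h : δ (h z) = z - δ (i y) := by
    have e : z - δ (h z) = δ (i y) := by simpa using LinearMap.congr_fun hg (δ (i y))
    rw [← e]
    abel
  rw [h_dX_i, h_dX_h, δ_h, map_sub]
  abel

end Perturbation

theorem perturbed_key_vanishing_general {R X Y : Type*} [CommRing R]
    [AddCommGroup X] [Module R X] [AddCommGroup Y] [Module R Y]
    -- gradings of the complexes X and Y
    (A : ℕ → Submodule R X)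
    [DirectSum.Decomposition A]
    -- the differentials
    (dX : X →ₗ[R] X) (dY : Y →ₗ[R] Y)
    -- the dg algebra structure on X : bilinear, unital, associative product
    -- compatible with the grading and satisfying the Leibniz rule
    (mul : X →ₗ[R] X →ₗ[R] X)
    (hLeib : ∀ m : ℕ, ∀ x ∈ A m, ∀ y : X,
      dX (mul x y) = mul (dX x) y + ((-1 : ℤ) ^ m) • mul x (dX y))
    -- the deformation retract (i, p, h)
    (i : Y →ₗ[R] X) (p : X →ₗ[R] Y) (h : X →ₗ[R] X)
    (hichain : dX ∘ₗ i = i ∘ₗ dY)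
    (hhdeg : ∀ n : ℕ, ∀ x ∈ A n, h x ∈ A (n + 1))
    (hip : i ∘ₗ p = LinearMap.id + dX ∘ₗ h + h ∘ₗ dX)
    -- h satisfies the generalized Leibniz rule : h(ab) ∈ h(a)·X + X·h(b)
    (hgen : ∀ a b : X, ∃ u v : X, h (mul a b) = mul (h a) u + mul v (h b))
    -- h ∘ i = 0
    (hhi : h ∘ₗ i = 0)
    -- special deformation retract side conditions
    (hhh : h ∘ₗ h = 0)
    -- the small perturbation δ : same degree as dX, satisfies the Leibniz
    -- rule (so (X, dX + δ) is again a dg algebra with the same product),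
    -- and (dX + δ)² = 0
    (δ : X →ₗ[R] X)
    (hδLeib : ∀ m : ℕ, ∀ x ∈ A m, ∀ y : X,
      δ (mul x y) = mul (δ x) y + ((-1 : ℤ) ^ m) • mul x (δ y))
    -- g = (1 - δ∘h)⁻¹, so that A = (1-δh)⁻¹δ = g ∘ δ
    (g : X →ₗ[R] X)
    (hg2 : (LinearMap.id - δ ∘ₗ h) ∘ₗ g = LinearMap.id) :
    ∀ α β : Y,
      (dX + δ) ((h + (h ∘ₗ (g ∘ₗ δ)) ∘ₗ h)
          (mul ((i + (h ∘ₗ (g ∘ₗ δ)) ∘ₗ i) α) ((i + (h ∘ₗ (g ∘ₗ δ)) ∘ₗ i) β)))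
        + (h + (h ∘ₗ (g ∘ₗ δ)) ∘ₗ h)
          ((dX + δ)
            (mul ((i + (h ∘ₗ (g ∘ₗ δ)) ∘ₗ i) α) ((i + (h ∘ₗ (g ∘ₗ δ)) ∘ₗ i) β)))
      = 0 := by
  intro α β
  set a := (i + (h ∘ₗ (g ∘ₗ δ)) ∘ₗ i) α
  set b := (i + (h ∘ₗ (g ∘ₗ δ)) ∘ₗ i) β
  have ha : h a = 0 := homotopy_perturbedInclusion_eq_zero hhi hhh α
  have hb : h b = 0 := homotopy_perturbedInclusion_eq_zero hhi hhh β
  have hDa : h ((dX + δ) a) = 0 :=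
    homotopy_perturbedDifferential_perturbedInclusion_eq_zero hichain hip hhi hhh hg2 α
  have hDb : h ((dX + δ) b) = 0 :=
    homotopy_perturbedDifferential_perturbedInclusion_eq_zero hichain hip hhi hhh hg2 β
  have hDab : h ((dX + δ) (mul a b)) = 0 :=
    map_derivation_mul_eq_zero_of_genLeibniz (IsGradedDerivation.add hLeib hδLeib) hgen hhdeg
      ha hb hDa hDb
  rw [perturbedHomotopy_apply_eq_zero (map_mul_eq_zero_of_genLeibniz hgen ha hb),
    perturbedHomotopy_apply_eq_zero hDab, map_zero, add_zero]

theorem perturbed_key_vanishing {R X Y : Type*} [CommRing R]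
    [AddCommGroup X] [Module R X] [AddCommGroup Y] [Module R Y]
    -- gradings of the complexes X and Y
    (A : ℕ → Submodule R X) (B : ℕ → Submodule R Y)
    [DirectSum.Decomposition A] [DirectSum.Decomposition B]
    -- the differentials
    (dX : X →ₗ[R] X) (dY : Y →ₗ[R] Y)
    (hdX2 : dX ∘ₗ dX = 0) (hdY2 : dY ∘ₗ dY = 0)
    (hdXdeg : ∀ n : ℕ, ∀ x ∈ A (n + 1), dX x ∈ A n)
    (hdX0 : ∀ x ∈ A 0, dX x = 0)
    (hdYdeg : ∀ n : ℕ, ∀ y ∈ B (n + 1), dY y ∈ B n)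
    (hdY0 : ∀ y ∈ B 0, dY y = 0)
    -- the dg algebra structure on X : bilinear, unital, associative product
    -- compatible with the grading and satisfying the Leibniz rule
    (mul : X →ₗ[R] X →ₗ[R] X) (one : X) (hone : one ∈ A 0)
    (hone_l : ∀ x, mul one x = x) (hone_r : ∀ x, mul x one = x)
    (hassoc : ∀ x y z : X, mul (mul x y) z = mul x (mul y z))
    (hmuldeg : ∀ m n : ℕ, ∀ x ∈ A m, ∀ y ∈ A n, mul x y ∈ A (m + n))
    (hLeib : ∀ m : ℕ, ∀ x ∈ A m, ∀ y : X,
      dX (mul x y) = mul (dX x) y + ((-1 : ℤ) ^ m) • mul x (dX y))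
    -- the deformation retract (i, p, h)
    (i : Y →ₗ[R] X) (p : X →ₗ[R] Y) (h : X →ₗ[R] X)
    (hichain : dX ∘ₗ i = i ∘ₗ dY) (hpchain : dY ∘ₗ p = p ∘ₗ dX)
    (hideg : ∀ n : ℕ, ∀ y ∈ B n, i y ∈ A n)
    (hpdeg : ∀ n : ℕ, ∀ x ∈ A n, p x ∈ B n)
    (hhdeg : ∀ n : ℕ, ∀ x ∈ A n, h x ∈ A (n + 1))
    (hpi : p ∘ₗ i = LinearMap.id)
    (hip : i ∘ₗ p = LinearMap.id + dX ∘ₗ h + h ∘ₗ dX)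
    -- h satisfies the generalized Leibniz rule : h(ab) ∈ h(a)·X + X·h(b)
    (hgen : ∀ a b : X, ∃ u v : X, h (mul a b) = mul (h a) u + mul v (h b))
    -- h ∘ i = 0
    (hhi : h ∘ₗ i = 0)
    -- special deformation retract side conditions
    (hph : p ∘ₗ h = 0) (hhh : h ∘ₗ h = 0)
    -- the small perturbation δ : same degree as dX, satisfies the Leibniz
    -- rule (so (X, dX + δ) is again a dg algebra with the same product),
    -- and (dX + δ)² = 0
    (δ : X →ₗ[R] X)
    (hδdeg : ∀ n : ℕ, ∀ x ∈ A (n + 1), δ x ∈ A n)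
    (hδ0 : ∀ x ∈ A 0, δ x = 0)
    (hδLeib : ∀ m : ℕ, ∀ x ∈ A m, ∀ y : X,
      δ (mul x y) = mul (δ x) y + ((-1 : ℤ) ^ m) • mul x (δ y))
    (hperturb : (dX + δ) ∘ₗ (dX + δ) = 0)
    (hnil : ∀ x : X, ∃ N : ℕ, ((δ ∘ₗ h : X →ₗ[R] X) ^ N) x = 0)
    -- g = (1 - δ∘h)⁻¹, so that A = (1-δh)⁻¹δ = g ∘ δ
    (g : X →ₗ[R] X)
    (hg1 : g ∘ₗ (LinearMap.id - δ ∘ₗ h) = LinearMap.id)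
    (hg2 : (LinearMap.id - δ ∘ₗ h) ∘ₗ g = LinearMap.id) :
    ∀ α β : Y,
      (dX + δ) ((h + (h ∘ₗ (g ∘ₗ δ)) ∘ₗ h)
          (mul ((i + (h ∘ₗ (g ∘ₗ δ)) ∘ₗ i) α) ((i + (h ∘ₗ (g ∘ₗ δ)) ∘ₗ i) β)))
        + (h + (h ∘ₗ (g ∘ₗ δ)) ∘ₗ h)
          ((dX + δ)
            (mul ((i + (h ∘ₗ (g ∘ₗ δ)) ∘ₗ i) α) ((i + (h ∘ₗ (g ∘ₗ δ)) ∘ₗ i) β)))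
      = 0 :=
  perturbed_key_vanishing_general A dX dY mul hLeib i p h hichain hhdeg hip hgen hhi hhh δ hδLeib g
    hg2
end

section
/- Let X be an A_∞-algebra and (i, p, h) a deformation retract onto Y with h∘i = 0 and h satisfying the generalized Leibniz rule for A_∞-algebras: h(m_n(a_1 ⊗ ⋯ ⊗ a_n)) ∈ Σ_{j=1}^n m_n(X ⊗ ⋯ ⊗ h(a_j) ⊗ ⋯ ⊗ X) for all n ≥ 2. Then the operations transferred via the Homotopy Transfer Theorem are simply m_n^Y = p ∘ m_n^X ∘ (i ⊗ ⋯ ⊗ i) for all n ≥ 1. -/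
/-- Planar rooted trees with inputs of type `α` at the leaves. -/
inductive PT (α : Type*) : Type _ where
  | leaf : α → PT α
  | node : List (PT α) → PT α

/-- Well-formed trees: every internal vertex has at least two children. -/
inductive PT.Good {α : Type*} : PT α → Prop where
  | leaf (y : α) : PT.Good (.leaf y)
  | node (ts : List (PT α)) : 2 ≤ ts.length → (∀ t ∈ ts, PT.Good t) →
      PT.Good (.node ts)

/-- The Homotopy Transfer Theorem composite attached to a planar rooted tree
(below the root): a leaf carrying `y : Y` contributes `i y`, and each
internal vertex with children `ts` contributes `h (mX [values of ts])`, where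
`mX l` denotes the A_∞-operation `m_{l.length}^X` applied to the list `l`. -/
noncomputable def PT.evh {X Y : Type*} [AddCommGroup X] [AddCommGroup Y]
    (i : Y → X) (h : X → X) (mX : List X → X) : PT Y → X
  | .leaf y => i y
  | .node ts => h (mX (ts.attach.map (fun t => PT.evh i h mX t.1)))
  decreasing_by
    simp only [PT.node.sizeOf_spec]
    exact Nat.lt_of_lt_of_le (List.sizeOf_lt_of_mem t.2) (Nat.le_add_left _ _)

/-!
The transfer formula only ever feeds `h` into an operation, and `h` kills
every tree value: at a leaf because `h ∘ i = 0`, and at an internal vertex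
because the generalized Leibniz rule rewrites `h (m_n (a₁, …, aₙ))` as a sum
of operations each having some `h aⱼ` as an input, which vanishes by
induction. Hence every internal vertex below the root evaluates to `0`, and
only the corolla survives.
-/

def SatisfiesAInftyLeibniz {X : Type*} [AddCommMonoid X] (h : X → X) (mX : List X → X) :
    Prop :=
  ∀ l : List X, 2 ≤ l.length → ∃ v : Fin l.length → List X × List X,
    h (mX l) = ∑ j, mX ((v j).1 ++ h (l.get j) :: (v j).2)

namespace PT

variable {X Y : Type*} [AddCommGroup X] [AddCommGroup Y]
  {i : Y → X} {h : X → X} {mX : List X → X}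

theorem evh_leaf (y : Y) : evh i h mX (.leaf y) = i y := by
  rw [evh]

theorem evh_node (ts : List (PT Y)) :
    evh i h mX (.node ts) = h (mX (ts.map (evh i h mX))) := by
  rw [evh, List.attach_map_val]

theorem evh_node_eq_zero
    (hzero : ∀ l₁ l₂ : List X, mX (l₁ ++ 0 :: l₂) = 0)
    (hgen : SatisfiesAInftyLeibniz h mX)
    {ts : List (PT Y)} (hlen : 2 ≤ ts.length) (hker : ∀ t ∈ ts, h (evh i h mX t) = 0) :
    evh i h mX (.node ts) = 0 := by
  set l := ts.map (evh i h mX)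
  obtain ⟨v, hv⟩ := hgen l (by rwa [List.length_map])
  rw [evh_node, hv]
  refine Finset.sum_eq_zero fun j _ => ?_
  obtain ⟨t, ht, htj⟩ := List.mem_map.1 (l.get_mem j)
  rw [← htj, hker t ht, hzero]

theorem apply_evh_eq_zero_of_good
    (hzero : ∀ l₁ l₂ : List X, mX (l₁ ++ 0 :: l₂) = 0)
    (hgen : SatisfiesAInftyLeibniz h mX)
    (h0 : h 0 = 0) (hhi : ∀ y, h (i y) = 0) {t : PT Y} (ht : t.Good) :
    h (evh i h mX t) = 0 := by
  induction ht with
  | leaf y => rw [evh_leaf, hhi]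
  | node ts hlen _ ih => rw [evh_node_eq_zero hzero hgen hlen ih, h0]

theorem evh_eq_zero_of_good_node
    (hzero : ∀ l₁ l₂ : List X, mX (l₁ ++ 0 :: l₂) = 0)
    (hgen : SatisfiesAInftyLeibniz h mX)
    (h0 : h 0 = 0) (hhi : ∀ y, h (i y) = 0) {ts : List (PT Y)} (hgood : (node ts).Good) :
    evh i h mX (.node ts) = 0 := by
  cases hgood with
  | node _ hlen hchildren =>
    exact evh_node_eq_zero hzero hgen hlen fun t ht =>
      apply_evh_eq_zero_of_good hzero hgen h0 hhi (hchildren t ht)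

end PT

theorem HTT_Ainfinity_transferred_operations_general {R X Y : Type*} [CommRing R]
    [AddCommGroup X] [Module R X] [AddCommGroup Y] [Module R Y]
    (i : Y →ₗ[R] X) (p : X →ₗ[R] Y) (h : X →ₗ[R] X)
    (hhi : h ∘ₗ i = 0)
    -- the A_∞-operations of X, as a single map on lists (mX on lists of
    -- length n is the operation m_n^X); m_1 = dX; multilinear in each slot
    (mX : List X → X)
    (hzero : ∀ l1 l2 : List X, mX (l1 ++ (0 : X) :: l2) = 0)
    -- the generalized Leibniz rule for A_∞-algebras :
    -- h(m_n(a₁ ⊗ ⋯ ⊗ aₙ)) ∈ Σ_j m_n(X ⊗ ⋯ ⊗ h(a_j) ⊗ ⋯ ⊗ X) for n ≥ 2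
    (hgenA : ∀ l : List X, 2 ≤ l.length →
      ∃ v : Fin l.length → List X × List X,
        (∀ j, (v j).1.length = (j : ℕ)) ∧
        h (mX l) = ∑ j : Fin l.length,
          mX ((v j).1 ++ h (l.get j) :: (v j).2)) :
    -- conclusion: every well-formed tree with at least one internal vertex
    -- below the root (i.e. other than the corolla) contributes zero, hence
    -- the transferred A_∞-structure on Y is m_n^Y = p ∘ m_n^X ∘ (i ⊗ ⋯ ⊗ i)
    (∀ ts : List (PT Y), 2 ≤ ts.length → (∀ t ∈ ts, t.Good) →
      (∃ t ∈ ts, ∃ us : List (PT Y), t = PT.node us) →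
      p (mX (ts.map (PT.evh (fun y => i y) (fun x => h x) mX))) = 0) ∧
    (∀ ys : List Y,
      p (mX ((ys.map (fun y => PT.leaf y)).map
          (PT.evh (fun y => i y) (fun x => h x) mX))) =
        p (mX (ys.map (fun y => i y)))) := by
  have hgen : SatisfiesAInftyLeibniz h mX := fun l hl => (hgenA l hl).imp fun _ hv => hv.2
  constructor
  · rintro ts - hgood ⟨t, ht, us, rfl⟩
    obtain ⟨l₁, l₂, hsplit⟩ := List.append_of_mem
      (List.mem_map_of_mem (f := PT.evh (fun y => i y) (fun x => h x) mX) ht)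
    rw [hsplit, PT.evh_eq_zero_of_good_node hzero hgen (map_zero h)
      (fun y => LinearMap.congr_fun hhi y) (hgood _ ht), hzero, map_zero]
  · intro ys
    simp only [List.map_map, Function.comp_def, PT.evh_leaf]

theorem HTT_Ainfinity_transferred_operations {R X Y : Type*} [CommRing R]
    [AddCommGroup X] [Module R X] [AddCommGroup Y] [Module R Y]
    (dX : X →ₗ[R] X) (dY : Y →ₗ[R] Y)
    (hdX2 : dX ∘ₗ dX = 0) (hdY2 : dY ∘ₗ dY = 0)
    (i : Y →ₗ[R] X) (p : X →ₗ[R] Y) (h : X →ₗ[R] X)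
    (hichain : dX ∘ₗ i = i ∘ₗ dY) (hpchain : dY ∘ₗ p = p ∘ₗ dX)
    (hpi : p ∘ₗ i = LinearMap.id)
    (hip : i ∘ₗ p = LinearMap.id + dX ∘ₗ h + h ∘ₗ dX)
    (hhi : h ∘ₗ i = 0)
    -- the A_∞-operations of X, as a single map on lists (mX on lists of
    -- length n is the operation m_n^X); m_1 = dX; multilinear in each slot
    (mX : List X → X)
    (hm1 : ∀ x : X, mX [x] = dX x)
    (hadd : ∀ (l1 l2 : List X) (x y : X),
      mX (l1 ++ (x + y) :: l2) = mX (l1 ++ x :: l2) + mX (l1 ++ y :: l2))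
    (hsmul : ∀ (l1 l2 : List X) (r : R) (x : X),
      mX (l1 ++ (r • x) :: l2) = r • mX (l1 ++ x :: l2))
    (hzero : ∀ l1 l2 : List X, mX (l1 ++ (0 : X) :: l2) = 0)
    -- the generalized Leibniz rule for A_∞-algebras :
    -- h(m_n(a₁ ⊗ ⋯ ⊗ aₙ)) ∈ Σ_j m_n(X ⊗ ⋯ ⊗ h(a_j) ⊗ ⋯ ⊗ X) for n ≥ 2
    (hgenA : ∀ l : List X, 2 ≤ l.length →
      ∃ v : Fin l.length → List X × List X,
        (∀ j, (v j).1.length = (j : ℕ)) ∧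
        h (mX l) = ∑ j : Fin l.length,
          mX ((v j).1 ++ h (l.get j) :: (v j).2)) :
    -- conclusion: every well-formed tree with at least one internal vertex
    -- below the root (i.e. other than the corolla) contributes zero, hence
    -- the transferred A_∞-structure on Y is m_n^Y = p ∘ m_n^X ∘ (i ⊗ ⋯ ⊗ i)
    (∀ ts : List (PT Y), 2 ≤ ts.length → (∀ t ∈ ts, t.Good) →
      (∃ t ∈ ts, ∃ us : List (PT Y), t = PT.node us) →
      p (mX (ts.map (PT.evh (fun y => i y) (fun x => h x) mX))) = 0) ∧
    (∀ ys : List Y,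
      p (mX ((ys.map (fun y => PT.leaf y)).map
          (PT.evh (fun y => i y) (fun x => h x) mX))) =
        p (mX (ys.map (fun y => i y)))) :=
  HTT_Ainfinity_transferred_operations_general i p h hhi mX hzero hgenA
end
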